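/- Let M = ![![(1:ℤ),1,1,2],![1,1,2,1],![1,2,2,2],![2,1,2,2]] and N = ![![-2,-2,1,2],![-2,-2,2,1],![1,2,-1,-1],![2,1,-1,-1]]. Then M * N = 1, N * M = 1, |M.det| = 1, every entry of M and N is nonzero, and every entry of M and N has absolute value at most 2. -/

import Mathlib

theorem unimodular_zerofree_4x4 :
    let M : Matrix (Fin 4) (Fin 4) ℤ :=
      ![![1, 1, 1, 2], ![1, 1, 2, 1], ![1, 2, 2, 2], ![2, 1, 2, 2]]
    let N : Matrix (Fin 4) (Fin 4) ℤ :=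
      ![![-2, -2, 1, 2], ![-2, -2, 2, 1], ![1, 2, -1, -1], ![2, 1, -1, -1]]
    M * N = 1 ∧ N * M = 1 ∧ |M.det| = 1 ∧
    (∀ i j, M i j ≠ 0) ∧ (∀ i j, N i j ≠ 0) ∧
    (∀ i j, |M i j| ≤ 2) ∧ (∀ i j, |N i j| ≤ 2) := by
  intro M N
  have hMN : M * N = 1 := by decide
  have hdet : |M.det| = 1 :=
    Int.isUnit_iff_abs_eq.mp (Matrix.isUnit_det_of_right_inverse hMN)
  exact ⟨hMN, by decide, hdet, by decide, by decide, by decide, by decide⟩
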